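/- For two linear orderings L_1 and L_2 of a finite set C, the corresponding vertices of the multiple choice polytope (equivalently, the characteristic vectors of the associated ∅–C paths in the network whose nodes are subsets of C and arcs are covering pairs of inclusion) are adjacent if and only if: whenever a nonempty proper subset S of C is a beginning set of both L_1 and L_2, then L_1 and L_2 coincide on S or on C \ S. -/

import Mathlib

open scoped Classical

variable {V : Type*} [Fintype V] [DecidableEq V]

/-- A directed graph (arc set `A`) is acyclic: no directed cycle. -/
def Acyclic (A : Finset (V × V)) : Prop :=
  ∀ v : V, ¬ Relation.TransGen (fun u w => (u, w) ∈ A) v v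

/-- Sum of `x` over the arcs of `A` with tail `v`. -/
noncomputable def outSum (A : Finset (V × V)) (x : V × V → ℝ) (v : V) : ℝ :=
  ∑ a ∈ A.filter (fun a => a.1 = v), x a

/-- Sum of `x` over the arcs of `A` with head `v`. -/
noncomputable def inSum (A : Finset (V × V)) (x : V × V → ℝ) (v : V) : ℝ :=
  ∑ a ∈ A.filter (fun a => a.2 = v), x a

/-- A flow of value 1 in the network `(V, A, s, t)`. -/
def IsFlow (A : Finset (V × V)) (s t : V) (x : V × V → ℝ) : Prop :=
  (∀ a, a ∉ A → x a = 0) ∧ (∀ a, 0 ≤ x a) ∧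
    (∀ v, v ≠ s → v ≠ t → outSum A x v = inSum A x v) ∧
    outSum A x s - inSum A x s = 1

/-- The flow polytope: all value-1 flows, as a subset of `ℝ^(V × V)`. -/
def flowPolytope (A : Finset (V × V)) (s t : V) : Set ((V × V) → ℝ) :=
  {x | IsFlow A s t x}

/-- An `s`–`t` path, given by its list of nodes. -/
def IsPath (A : Finset (V × V)) (s t : V) (p : List V) : Prop :=
  p.Chain' (fun u v => (u, v) ∈ A) ∧ p.head? = some s ∧ p.getLast? = some t ∧ p.Nodup

/-- The arcs of a path given by its node list. -/
def pathEdges (p : List V) : List (V × V) := p.zip p.tail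

/-- Characteristic vector of (the arc set of) a path. -/
def chi (p : List V) : (V × V) → ℝ := fun a => if a ∈ pathEdges p then 1 else 0

/-- Two vertices of a polytope `S` are adjacent when the segment joining them is a
(one-dimensional) face of `S`, i.e. an exposed face. -/
def AdjacentVerts (S : Set ((V × V) → ℝ)) (x y : (V × V) → ℝ) : Prop :=
  x ≠ y ∧ IsExposed ℝ S (segment ℝ x y)

/-- A facet: a proper maximal (exposed) face. -/
def IsFacetOf (S F : Set ((V × V) → ℝ)) : Prop :=
  IsExposed ℝ S F ∧ F ≠ S ∧ ∀ G, IsExposed ℝ S G → G ≠ S → F ⊆ G → G = F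

/-- The arcs of the network `D_LO(C) = (2^C, ≺, ∅, C)`: the covering pairs of inclusion. -/
def mcArcs (α : Type*) [Fintype α] [DecidableEq α] : Finset (Finset α × Finset α) :=
  Finset.univ.filter fun a => a.1 ⊆ a.2 ∧ a.2.card = a.1.card + 1

/-- A linear ordering of `α`, encoded as the list of all elements in decreasing order. -/
def IsLinOrd {α : Type*} (l : List α) : Prop := l.Nodup ∧ ∀ a : α, a ∈ l

/-- The `∅`–`C` path corresponding to a linear ordering: the list of its beginning sets. -/
def pathOf {α : Type*} [DecidableEq α] (l : List α) : List (Finset α) :=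
  (List.range (l.length + 1)).map fun k => (l.take k).toFinset

/-!
A unit flow on `D_LO(C)` sends total flow `1` from level `k` to level `k + 1` for every `k`.
Let `W` be the union of the arc sets of the paths `P₁`, `P₂` of `L₁`, `L₂`; the flows supported
on `W` form an exposed face (they maximize `-∑_{a ∉ W} y a`). If `L₁`, `L₂` coincide on one side
of every common beginning set, then the paths agree up to some level, then pass through distinct
nodes, then agree again. Conservation at those distinct nodes makes the flow on the arcs of `P₁`
there a constant `t`, so the face is the segment `[χ(P₁), χ(P₂)]`.

Conversely, if `L₁`, `L₂` differ on both `S` and `C \ S` for a common beginning set `S`, swapping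
their parts after `S` gives orderings `L₃`, `L₄` with `χ₃ + χ₄ = χ₁ + χ₂`. An exposed face that
contains `χ₁` and `χ₂` then contains `χ₃`, which is a `0/1` vector different from both and so
does not lie on the segment.
-/

section Convexity

lemma IsExposed.mem_of_add_eq {E : Type*} [AddCommGroup E] [Module ℝ E] [TopologicalSpace E]
    {S F : Set E} (hF : IsExposed ℝ S F) {x y u v : E} (hx : x ∈ F) (hy : y ∈ F) (hu : u ∈ S)
    (hv : v ∈ S) (h : u + v = x + y) : u ∈ F := by
  obtain ⟨l, rfl⟩ := hF ⟨x, hx⟩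
  have hsum : l u + l v = l x + l y := by rw [← map_add, ← map_add, h]
  have hvy := hy.2 v hv
  exact ⟨hu, fun z hz => (hx.2 z hz).trans (by linarith)⟩

lemma isExposed_setOf_forall_eq_zero {ι : Type*} [Fintype ι] {S : Set (ι → ℝ)}
    (hS : ∀ y ∈ S, ∀ i, 0 ≤ y i) (p : ι → Prop) [DecidablePred p] :
    IsExposed ℝ S {y ∈ S | ∀ i, p i → y i = 0} := by
  rintro ⟨y₀, hy₀S, hy₀⟩
  refine ⟨-∑ i ∈ Finset.univ.filter p, ContinuousLinearMap.proj i, ?_⟩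
  have hl : ∀ y : ι → ℝ, (-∑ i ∈ Finset.univ.filter p, ContinuousLinearMap.proj (R := ℝ) i) y
      = -∑ i ∈ Finset.univ.filter p, y i := by
    intro y; simp
  have hl_nonpos : ∀ y ∈ S, -∑ i ∈ Finset.univ.filter p, y i ≤ 0 := fun y hy =>
    neg_nonpos.2 (Finset.sum_nonneg fun i _ => hS y hy i)
  ext y
  simp only [Set.mem_ofPred_eq, hl, and_congr_right_iff]
  intro hy
  constructor
  · intro hzero z hz
    rw [Finset.sum_eq_zero fun i hi => hzero i (Finset.mem_filter.1 hi).2, neg_zero]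
    exact hl_nonpos z hz
  · intro hmax i hi
    have hy₀zero : ∑ i ∈ Finset.univ.filter p, y₀ i = 0 :=
      Finset.sum_eq_zero fun i hi => hy₀ i (Finset.mem_filter.1 hi).2
    have hsum : ∑ i ∈ Finset.univ.filter p, y i = 0 := by
      have := hmax y₀ hy₀S
      linarith [hl_nonpos y hy]
    exact (Finset.sum_eq_zero_iff_of_nonneg fun i _ => hS y hy i).1 hsum i
      (Finset.mem_filter.2 ⟨Finset.mem_univ i, hi⟩)

lemma eq_or_eq_of_mem_segment_of_zero_one {ι : Type*} {f g h : ι → ℝ}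
    (hf : ∀ i, f i = 0 ∨ f i = 1) (hg : ∀ i, g i = 0 ∨ g i = 1) (hh : ∀ i, h i = 0 ∨ h i = 1)
    (hfg : f ≠ g) (hmem : h ∈ segment ℝ f g) : h = f ∨ h = g := by
  obtain ⟨a, b, -, -, hab, rfl⟩ := hmem
  obtain ⟨i, hi⟩ := Function.ne_iff.1 hfg
  have ha : a = 0 ∨ a = 1 := by
    have hhi := hh i
    simp only [Pi.add_apply, Pi.smul_apply, smul_eq_mul] at hhi
    rcases hf i with h0 | h0 <;> rcases hg i with h1 | h1 <;> rw [h0, h1] at hhi hi <;>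
      norm_num at hi <;> rcases hhi with h | h <;> first | (left; linarith) | (right; linarith)
  rcases ha with rfl | rfl
  · right; obtain rfl : b = 1 := by linarith
    simp
  · left; obtain rfl : b = 0 := by linarith
    simp

end Convexity

section Flows

variable {V : Type*} [DecidableEq V]

lemma convex_flowPolytope (A : Finset (V × V)) (s t : V) : Convex ℝ (flowPolytope A s t) := by
  have hout : ∀ (x y : V × V → ℝ) (a b : ℝ) v,
      outSum A (a • x + b • y) v = a * outSum A x v + b * outSum A y v := by
    intro x y a b v; simp [outSum, Finset.sum_add_distrib, Finset.mul_sum]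
  have hin : ∀ (x y : V × V → ℝ) (a b : ℝ) v,
      inSum A (a • x + b • y) v = a * inSum A x v + b * inSum A y v := by
    intro x y a b v; simp [inSum, Finset.sum_add_distrib, Finset.mul_sum]
  intro x ⟨hxA, hx0, hxc, hxv⟩ y ⟨hyA, hy0, hyc, hyv⟩ a b ha hb hab
  refine ⟨fun e he => by simp [hxA e he, hyA e he], fun e => ?_, fun v hs ht => ?_, ?_⟩
  · simp only [Pi.add_apply, Pi.smul_apply, smul_eq_mul]
    have := hx0 e; have := hy0 e
    positivity
  · rw [hout, hin, hxc v hs ht, hyc v hs ht]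
  · rw [hout, hin]
    linear_combination a * hxv + b * hyv + hab

lemma sum_outSum (A : Finset (V × V)) (x : V × V → ℝ) (T : Finset V) :
    ∑ v ∈ T, outSum A x v = ∑ a ∈ A.filter (fun a => a.1 ∈ T), x a := by
  rw [← Finset.sum_fiberwise_of_maps_to (g := Prod.fst) fun a ha => (Finset.mem_filter.1 ha).2]
  refine Finset.sum_congr rfl fun v hv => ?_
  rw [outSum, Finset.filter_filter]
  exact Finset.sum_congr (Finset.filter_congr fun a _ => by grind) fun _ _ => rfl

lemma sum_inSum (A : Finset (V × V)) (x : V × V → ℝ) (T : Finset V) :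
    ∑ v ∈ T, inSum A x v = ∑ a ∈ A.filter (fun a => a.2 ∈ T), x a := by
  rw [← Finset.sum_fiberwise_of_maps_to (g := Prod.snd) fun a ha => (Finset.mem_filter.1 ha).2]
  refine Finset.sum_congr rfl fun v hv => ?_
  rw [inSum, Finset.filter_filter]
  exact Finset.sum_congr (Finset.filter_congr fun a _ => by grind) fun _ _ => rfl

lemma outSum_eq_of_forall_ne {A : Finset (V × V)} {x : V × V → ℝ} {v : V} {e : V × V}
    (he : e ∈ A) (hev : e.1 = v) (hx : ∀ a ∈ A, a.1 = v → a ≠ e → x a = 0) :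
    outSum A x v = x e :=
  Finset.sum_eq_single_of_mem e (Finset.mem_filter.2 ⟨he, hev⟩) fun a ha hae =>
    hx a (Finset.mem_filter.1 ha).1 (Finset.mem_filter.1 ha).2 hae

lemma inSum_eq_of_forall_ne {A : Finset (V × V)} {x : V × V → ℝ} {v : V} {e : V × V}
    (he : e ∈ A) (hev : e.2 = v) (hx : ∀ a ∈ A, a.2 = v → a ≠ e → x a = 0) :
    inSum A x v = x e :=
  Finset.sum_eq_single_of_mem e (Finset.mem_filter.2 ⟨he, hev⟩) fun a ha hae =>
    hx a (Finset.mem_filter.1 ha).1 (Finset.mem_filter.1 ha).2 hae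

lemma chi_eq_zero_or_one (p : List V) (a : V × V) : chi p a = 0 ∨ chi p a = 1 := by
  unfold chi; split_ifs <;> simp

end Flows

section Orderings

variable {α : Type*} [DecidableEq α] {l l1 l2 : List α} {k m : ℕ}

def pathArc (l : List α) (k : ℕ) : Finset α × Finset α :=
  ((l.take k).toFinset, (l.take (k + 1)).toFinset)

lemma card_toFinset_take (h : l.Nodup) (k : ℕ) : (l.take k).toFinset.card = min k l.length := by
  rw [List.toFinset_card_of_nodup (h.sublist (List.take_sublist _ _)), List.length_take]

lemma toFinset_take_succ (hk : k < l.length) :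
    (l.take (k + 1)).toFinset = insert l[k] (l.take k).toFinset := by
  rw [List.take_add_one, List.getElem?_eq_getElem hk, Option.toList_some, List.toFinset_append,
    Finset.union_comm]
  rfl

lemma getElem_notMem_toFinset_take (h : l.Nodup) (hk : k < l.length) :
    l[k] ∉ (l.take k).toFinset := by
  rw [List.mem_toFinset, List.mem_take_iff_getElem]
  rintro ⟨i, hi, hEq⟩
  have := h.getElem_inj_iff.mp hEq
  omega

lemma eq_of_toFinset_take_eq (h1 : l1.Nodup) (hlen : l1.length = l2.length)
    (h : ∀ k ≤ l1.length, (l1.take k).toFinset = (l2.take k).toFinset) : l1 = l2 := by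
  refine List.ext_getElem hlen fun k hk1 hk2 => ?_
  have hins : insert l1[k] (l1.take k).toFinset = insert l2[k] (l1.take k).toFinset := by
    rw [← toFinset_take_succ hk1, h (k + 1) hk1, toFinset_take_succ hk2, ← h k hk1.le]
  have hmem := hins ▸ Finset.mem_insert_self l1[k] (l1.take k).toFinset
  exact (Finset.mem_insert.1 hmem).resolve_right (getElem_notMem_toFinset_take h1 hk1)

lemma pathEdges_pathOf (l : List α) :
    pathEdges (pathOf l) = (List.range l.length).map (pathArc l) := by
  refine List.ext_getElem (by simp [pathEdges, pathOf]) fun k hk _ => ?_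
  simp [pathEdges, pathOf, pathArc]

lemma mem_pathEdges_pathOf {a : Finset α × Finset α} :
    a ∈ pathEdges (pathOf l) ↔ ∃ k < l.length, pathArc l k = a := by
  simp [pathEdges_pathOf]

lemma card_pathArc_fst (h : l.Nodup) (hk : k ≤ l.length) : (pathArc l k).1.card = k := by
  simp [pathArc, card_toFinset_take h, hk]

lemma chi_pathOf_apply (h : l.Nodup) (a : Finset α × Finset α) :
    chi (pathOf l) a = if a.1.card < l.length ∧ a = pathArc l a.1.card then 1 else 0 := by
  have : a ∈ pathEdges (pathOf l) ↔ a.1.card < l.length ∧ a = pathArc l a.1.card := by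
    rw [mem_pathEdges_pathOf]
    constructor
    · rintro ⟨k, hk, rfl⟩
      rw [card_pathArc_fst h hk.le]
      exact ⟨hk, rfl⟩
    · exact fun ⟨hk, ha⟩ => ⟨_, hk, ha.symm⟩
  simp only [chi, this]

lemma chi_pathOf_pathArc (hk : k < l.length) : chi (pathOf l) (pathArc l k) = 1 :=
  if_pos (mem_pathEdges_pathOf.2 ⟨k, hk, rfl⟩)

lemma pathArc_eq_of_take_eq (h : l1.take m = l2.take m) (hk : k + 1 ≤ m) :
    pathArc l1 k = pathArc l2 k := by
  have htake : ∀ j ≤ m, l1.take j = l2.take j := fun j hj => by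
    rw [← Nat.min_eq_left hj, ← List.take_take, h, List.take_take]
  simp only [pathArc, htake k (by omega), htake (k + 1) hk]

lemma eq_pathArc_of_ne_zero (h1 : l1.Nodup) (h2 : l2.Nodup) {x : Finset α × Finset α → ℝ}
    (hsupp : ∀ a, chi (pathOf l1) a = 0 ∧ chi (pathOf l2) a = 0 → x a = 0)
    {a : Finset α × Finset α} (ha : x a ≠ 0) :
    a = pathArc l1 a.1.card ∨ a = pathArc l2 a.1.card := by
  by_contra hn
  rw [not_or] at hn
  refine ha (hsupp a ⟨?_, ?_⟩) <;> rw [chi_pathOf_apply (by assumption), if_neg]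
  exacts [fun h => hn.1 h.2, fun h => hn.2 h.2]

end Orderings

section LinearOrderings

variable {α : Type*} [Fintype α] [DecidableEq α] {l l1 l2 : List α} {k m : ℕ}

lemma IsLinOrd.length_eq (h : IsLinOrd l) : l.length = Fintype.card α := by
  rw [← List.toFinset_card_of_nodup h.1,
    Finset.eq_univ_iff_forall.2 fun a => List.mem_toFinset.2 (h.2 a), Finset.card_univ]

lemma IsLinOrd.toFinset_take_eq_compl (h : IsLinOrd l) (k : ℕ) :
    (l.take k).toFinset = (l.drop k).toFinsetᶜ := by
  have hnd : (l.take k ++ l.drop k).Nodup := (List.take_append_drop k l).symm ▸ h.1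
  ext a
  have hmem : a ∈ l.take k ++ l.drop k := (List.take_append_drop k l).symm ▸ h.2 a
  simp only [List.mem_toFinset, Finset.mem_compl]
  exact ⟨fun ha hd => List.disjoint_of_nodup_append hnd ha hd,
    fun hd => (List.mem_append.1 hmem).resolve_right hd⟩

lemma pathArc_eq_of_drop_eq (h1 : IsLinOrd l1) (h2 : IsLinOrd l2) (h : l1.drop m = l2.drop m)
    (hk : m ≤ k) : pathArc l1 k = pathArc l2 k := by
  have hdrop : ∀ j ≥ m, l1.drop j = l2.drop j := fun j hj => by
    rw [← Nat.add_sub_cancel' hj, ← List.drop_drop, h, List.drop_drop]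
  simp only [pathArc, h1.toFinset_take_eq_compl, h2.toFinset_take_eq_compl, hdrop k hk,
    hdrop (k + 1) (by omega)]

lemma pathArc_mem_mcArcs (h : l.Nodup) (hk : k < l.length) : pathArc l k ∈ mcArcs α := by
  simp only [mcArcs, Finset.mem_filter, Finset.mem_univ, true_and, pathArc,
    toFinset_take_succ hk]
  exact ⟨Finset.subset_insert _ _,
    Finset.card_insert_of_notMem (getElem_notMem_toFinset_take h hk)⟩

lemma eq_of_pathArc_eq (h1 : IsLinOrd l1) (h2 : IsLinOrd l2)
    (h : ∀ k < Fintype.card α, pathArc l1 k = pathArc l2 k) : l1 = l2 := by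
  refine eq_of_toFinset_take_eq h1.1 (h1.length_eq.trans h2.length_eq.symm) fun k hk => ?_
  rcases k with _ | k
  · rfl
  · exact congrArg Prod.snd (h k (h1.length_eq ▸ hk))

lemma exists_pathArc_ne (h1 : IsLinOrd l1) (h2 : IsLinOrd l2) (hne : l1 ≠ l2) :
    ∃ k < Fintype.card α, pathArc l1 k ≠ pathArc l2 k := by
  by_contra! h
  exact hne (eq_of_pathArc_eq h1 h2 h)

lemma chi_pathOf_injective (h1 : IsLinOrd l1) (h2 : IsLinOrd l2)
    (h : chi (pathOf l1) = chi (pathOf l2)) : l1 = l2 := by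
  refine eq_of_pathArc_eq h1 h2 fun k hk => ?_
  have hk1 : k < l1.length := h1.length_eq ▸ hk
  have hchi := congrFun h (pathArc l1 k)
  rw [chi_pathOf_pathArc hk1, chi_pathOf_apply h2.1, card_pathArc_fst h1.1 hk1.le] at hchi
  split_ifs at hchi with hc
  · exact hc.2
  · norm_num at hchi

end LinearOrderings

section PathFlows

variable {α : Type*} [Fintype α] [DecidableEq α] {l : List α}

lemma card_snd_of_mem_mcArcs {a : Finset α × Finset α} (ha : a ∈ mcArcs α) :
    a.2.card = a.1.card + 1 :=
  (Finset.mem_filter.1 ha).2.2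

lemma outSum_chi_pathOf (h : l.Nodup) (v : Finset α) :
    outSum (mcArcs α) (chi (pathOf l)) v =
      if v.card < l.length ∧ v = (l.take v.card).toFinset then 1 else 0 := by
  split_ifs with hv
  · rw [outSum_eq_of_forall_ne (pathArc_mem_mcArcs h hv.1) hv.2.symm, chi_pathOf_pathArc hv.1]
    intro a _ hav hne
    rw [chi_pathOf_apply h, if_neg]
    rintro ⟨-, ha⟩
    exact hne (ha.trans (by rw [hav]))
  · refine Finset.sum_eq_zero fun a ha => ?_
    obtain rfl := (Finset.mem_filter.1 ha).2
    rw [chi_pathOf_apply h, if_neg]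
    exact fun ⟨hlt, ha'⟩ => hv ⟨hlt, congrArg Prod.fst ha'⟩

lemma inSum_chi_pathOf (h : l.Nodup) (v : Finset α) :
    inSum (mcArcs α) (chi (pathOf l)) v =
      if 0 < v.card ∧ v.card ≤ l.length ∧ v = (l.take v.card).toFinset then 1 else 0 := by
  have hcard : ∀ a ∈ mcArcs α, a.2 = v → a.1.card + 1 = v.card := fun a ha hav => by
    rw [← hav, card_snd_of_mem_mcArcs ha]
  split_ifs with hv
  · obtain ⟨hpos, hle, hv⟩ := hv
    have hk : v.card - 1 < l.length := by omega
    have hsnd : (pathArc l (v.card - 1)).2 = v := by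
      simp only [pathArc, Nat.sub_add_cancel hpos]
      exact hv.symm
    rw [inSum_eq_of_forall_ne (pathArc_mem_mcArcs h hk) hsnd, chi_pathOf_pathArc hk]
    intro a ha hav hne
    rw [chi_pathOf_apply h, if_neg]
    rintro ⟨-, ha'⟩
    exact hne (ha'.trans (by rw [← hcard a ha hav, Nat.add_sub_cancel]))
  · refine Finset.sum_eq_zero fun a ha => ?_
    obtain ⟨ha, hav⟩ := Finset.mem_filter.1 ha
    rw [chi_pathOf_apply h, if_neg]
    rintro ⟨hlt, ha'⟩
    have hv' : (l.take (a.1.card + 1)).toFinset = v := (congrArg Prod.snd ha').symm.trans hav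
    have hva := hcard a ha hav
    exact hv ⟨by omega, by omega, by rw [← hva, hv']⟩

lemma chi_pathOf_mem_flowPolytope (h : IsLinOrd l) (hα : 0 < Fintype.card α) :
    chi (pathOf l) ∈ flowPolytope (mcArcs α) ∅ Finset.univ := by
  have hlen := h.length_eq
  refine ⟨fun a ha => ?_, fun a => ?_, fun v hv₀ hv₁ => ?_, ?_⟩
  · rw [chi_pathOf_apply h.1, if_neg]
    exact fun ⟨hlt, ha'⟩ => ha (ha' ▸ pathArc_mem_mcArcs h.1 hlt)
  · rcases chi_eq_zero_or_one (pathOf l) a with h0 | h0 <;> simp [h0]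
  · have hpos : 0 < v.card := Finset.card_pos.2 (Finset.nonempty_iff_ne_empty.2 hv₀)
    have hlt : v.card < l.length := hlen ▸ (Finset.card_lt_iff_ne_univ v).2 hv₁
    rw [outSum_chi_pathOf h.1, inSum_chi_pathOf h.1]
    simp only [hpos, hlt, hlt.le, true_and]
  · rw [outSum_chi_pathOf h.1, inSum_chi_pathOf h.1]
    simp [hlen, hα]

end PathFlows

section FlowsOnTwoPaths

variable {α : Type*} [Fintype α] [DecidableEq α] {l1 l2 : List α} {x : Finset α × Finset α → ℝ}
  {k : ℕ}

lemma sum_level_eq_one (hx : IsFlow (mcArcs α) ∅ Finset.univ x) (hk : k < Fintype.card α) :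
    ∑ a ∈ (mcArcs α).filter (fun a => a.1.card = k), x a = 1 := by
  induction k with
  | zero =>
    have hin : inSum (mcArcs α) x ∅ = 0 := Finset.sum_eq_zero fun a ha => by
      obtain ⟨ha, hempty⟩ := Finset.mem_filter.1 ha
      simpa [hempty] using card_snd_of_mem_mcArcs ha
    have hout := hx.2.2.2
    rw [hin, sub_zero] at hout
    simpa only [outSum, Finset.card_eq_zero] using hout
  | succ k ih =>
    set T := Finset.univ.filter fun v : Finset α => v.card = k + 1
    have hcons : ∀ v ∈ T, outSum (mcArcs α) x v = inSum (mcArcs α) x v := fun v hv => by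
      have hv : v.card = k + 1 := (Finset.mem_filter.1 hv).2
      refine hx.2.2.1 v (fun h => by simp [h] at hv) fun h => ?_
      rw [h, Finset.card_univ] at hv
      omega
    calc ∑ a ∈ (mcArcs α).filter (fun a => a.1.card = k + 1), x a
        = ∑ v ∈ T, outSum (mcArcs α) x v := by rw [sum_outSum]; simp [T]
      _ = ∑ v ∈ T, inSum (mcArcs α) x v := Finset.sum_congr rfl hcons
      _ = ∑ a ∈ (mcArcs α).filter (fun a => a.1.card = k), x a := by
        rw [sum_inSum]
        refine Finset.sum_congr (Finset.filter_congr fun a ha => ?_) fun _ _ => rfl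
        simp [T, card_snd_of_mem_mcArcs ha]
      _ = 1 := ih (by omega)

lemma sum_pair_pathArc_eq_one (h1 : IsLinOrd l1) (h2 : IsLinOrd l2)
    (hx : IsFlow (mcArcs α) ∅ Finset.univ x)
    (hsupp : ∀ a, chi (pathOf l1) a = 0 ∧ chi (pathOf l2) a = 0 → x a = 0)
    (hk : k < Fintype.card α) :
    ∑ a ∈ {pathArc l1 k, pathArc l2 k}, x a = 1 := by
  rw [← sum_level_eq_one hx hk]
  refine Finset.sum_subset (fun a ha => ?_) fun a ha hnot => ?_
  · rcases Finset.mem_insert.1 ha with rfl | ha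
    · exact Finset.mem_filter.2 ⟨pathArc_mem_mcArcs h1.1 (h1.length_eq ▸ hk),
        card_pathArc_fst h1.1 (h1.length_eq ▸ hk.le)⟩
    · rw [Finset.mem_singleton.1 ha]
      exact Finset.mem_filter.2 ⟨pathArc_mem_mcArcs h2.1 (h2.length_eq ▸ hk),
        card_pathArc_fst h2.1 (h2.length_eq ▸ hk.le)⟩
  · by_contra hxa
    have hcard := (Finset.mem_filter.1 ha).2
    rcases eq_pathArc_of_ne_zero h1.1 h2.1 hsupp hxa with h | h <;> rw [hcard] at h <;>
      simp [← h] at hnot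

lemma flow_pathArc_succ (h1 : IsLinOrd l1) (h2 : IsLinOrd l2)
    (hx : IsFlow (mcArcs α) ∅ Finset.univ x)
    (hsupp : ∀ a, chi (pathOf l1) a = 0 ∧ chi (pathOf l2) a = 0 → x a = 0)
    (hk : k + 1 < Fintype.card α)
    (hB : (l1.take (k + 1)).toFinset ≠ (l2.take (k + 1)).toFinset) :
    x (pathArc l1 (k + 1)) = x (pathArc l1 k) := by
  have hlen1 := h1.length_eq
  set v := (l1.take (k + 1)).toFinset
  have hv : v.card = k + 1 := by rw [card_toFinset_take h1.1]; omega
  have hcons := hx.2.2.1 v (fun h => by simp [h] at hv) fun h => by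
    rw [h, Finset.card_univ] at hv; omega
  rwa [outSum_eq_of_forall_ne (v := v) (pathArc_mem_mcArcs h1.1 (by omega)) rfl ?_,
    inSum_eq_of_forall_ne (v := v) (pathArc_mem_mcArcs h1.1 (by omega)) rfl ?_] at hcons
  · intro a ha hav hne
    by_contra hxa
    have hcard : a.1.card = k := by
      have := card_snd_of_mem_mcArcs ha; rw [hav, hv] at this; omega
    rcases eq_pathArc_of_ne_zero h1.1 h2.1 hsupp hxa with h | h <;> rw [hcard] at h
    · exact hne h
    · exact hB (hav.symm.trans (congrArg Prod.snd h))
  · intro a _ hav hne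
    by_contra hxa
    have hcard : a.1.card = k + 1 := by rw [hav, hv]
    rcases eq_pathArc_of_ne_zero h1.1 h2.1 hsupp hxa with h | h <;> rw [hcard] at h
    · exact hne h
    · exact hB (hav.symm.trans (congrArg Prod.fst h))

end FlowsOnTwoPaths

section Adjacency

variable {α : Type*} [Fintype α] [DecidableEq α] {l1 l2 : List α} {j k : ℕ}

/-- The common beginning set of size `k` is `(l.take k).toFinset`; coinciding on it or on its
complement amounts to equal prefixes or equal suffixes. -/
def CoincideOnOneSide (l1 l2 : List α) : Prop :=
  ∀ k, 0 < k → k < Fintype.card α → (l1.take k).toFinset = (l2.take k).toFinset →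
    l1.take k = l2.take k ∨ l1.drop k = l2.drop k

lemma toFinset_take_ne_of_pathArc_ne (h1 : IsLinOrd l1) (h2 : IsLinOrd l2)
    (hc : CoincideOnOneSide l1 l2) (hj : pathArc l1 j ≠ pathArc l2 j)
    (hk : pathArc l1 k ≠ pathArc l2 k) (hkN : k < Fintype.card α) {m : ℕ} (hjm : j < m)
    (hmk : m ≤ k) : (l1.take m).toFinset ≠ (l2.take m).toFinset := fun heq =>
  (hc m (by omega) (by omega) heq).elim (fun h => hj (pathArc_eq_of_take_eq h (by omega)))
    fun h => hk (pathArc_eq_of_drop_eq h1 h2 h hmk)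

lemma flow_pathArc_eq_of_pathArc_ne {x : Finset α × Finset α → ℝ} (h1 : IsLinOrd l1)
    (h2 : IsLinOrd l2) (hc : CoincideOnOneSide l1 l2) (hx : IsFlow (mcArcs α) ∅ Finset.univ x)
    (hsupp : ∀ a, chi (pathOf l1) a = 0 ∧ chi (pathOf l2) a = 0 → x a = 0)
    (hj : pathArc l1 j ≠ pathArc l2 j) (hk : pathArc l1 k ≠ pathArc l2 k)
    (hkN : k < Fintype.card α) (hjk : j ≤ k) :
    x (pathArc l1 k) = x (pathArc l1 j) := by
  suffices ∀ m, j ≤ m → m ≤ k → x (pathArc l1 m) = x (pathArc l1 j) from this k hjk le_rfl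
  intro m hjm
  induction m, hjm using Nat.le_induction with
  | base => exact fun _ => rfl
  | succ m _ ih =>
    intro hmk
    rw [flow_pathArc_succ h1 h2 hx hsupp (by omega)
      (toFinset_take_ne_of_pathArc_ne h1 h2 hc hj hk hkN (by omega) hmk)]
    exact ih (by omega)

lemma flow_pathArc_of_pathArc_ne {x : Finset α × Finset α → ℝ} (h1 : IsLinOrd l1)
    (h2 : IsLinOrd l2) (hc : CoincideOnOneSide l1 l2) (hx : IsFlow (mcArcs α) ∅ Finset.univ x)
    (hsupp : ∀ a, chi (pathOf l1) a = 0 ∧ chi (pathOf l2) a = 0 → x a = 0)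
    (hj : pathArc l1 j ≠ pathArc l2 j) (hjN : j < Fintype.card α)
    (hk : pathArc l1 k ≠ pathArc l2 k) (hkN : k < Fintype.card α) :
    x (pathArc l1 k) = x (pathArc l1 j) ∧ x (pathArc l2 k) = 1 - x (pathArc l1 j) := by
  have hpair := sum_pair_pathArc_eq_one h1 h2 hx hsupp hkN
  rw [Finset.sum_pair hk] at hpair
  have hk1 : x (pathArc l1 k) = x (pathArc l1 j) := by
    rcases le_total j k with hle | hle
    · exact flow_pathArc_eq_of_pathArc_ne h1 h2 hc hx hsupp hj hk hkN hle
    · exact (flow_pathArc_eq_of_pathArc_ne h1 h2 hc hx hsupp hk hj hjN hle).symm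
  exact ⟨hk1, by linarith⟩

lemma mem_segment_of_support {x : Finset α × Finset α → ℝ} (h1 : IsLinOrd l1)
    (h2 : IsLinOrd l2) (hne : l1 ≠ l2) (hc : CoincideOnOneSide l1 l2)
    (hx : IsFlow (mcArcs α) ∅ Finset.univ x)
    (hsupp : ∀ a, chi (pathOf l1) a = 0 ∧ chi (pathOf l2) a = 0 → x a = 0) :
    x ∈ segment ℝ (chi (pathOf l1)) (chi (pathOf l2)) := by
  obtain ⟨k₀, hk₀N, hk₀⟩ := exists_pathArc_ne h1 h2 hne
  set t := x (pathArc l1 k₀)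
  have hsplit : ∀ k < Fintype.card α, pathArc l1 k ≠ pathArc l2 k →
      x (pathArc l1 k) = t ∧ x (pathArc l2 k) = 1 - t := fun k hkN hk =>
    flow_pathArc_of_pathArc_ne h1 h2 hc hx hsupp hk₀ hk₀N hk hkN
  have hlen1 := h1.length_eq
  have hlen2 := h2.length_eq
  refine ⟨t, 1 - t, hx.2.1 _, (hsplit k₀ hk₀N hk₀).2 ▸ hx.2.1 _, by ring, funext fun a => ?_⟩
  simp only [Pi.add_apply, Pi.smul_apply, smul_eq_mul]
  by_cases hzero : chi (pathOf l1) a = 0 ∧ chi (pathOf l2) a = 0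
  · rw [hzero.1, hzero.2, hsupp a hzero]; ring
  rw [chi_pathOf_apply h1.1, chi_pathOf_apply h2.1, hlen1, hlen2] at hzero ⊢
  by_cases hkN : a.1.card < Fintype.card α
  swap
  · simp [hkN] at hzero
  simp only [hkN, true_and] at hzero ⊢
  generalize a.1.card = k at *
  by_cases hk : pathArc l1 k = pathArc l2 k
  · have hpair := sum_pair_pathArc_eq_one h1 h2 hx hsupp hkN
    rw [← hk, Finset.pair_eq_singleton, Finset.sum_singleton] at hpair
    by_cases ha : a = pathArc l1 k
    · subst ha; rw [if_pos rfl, if_pos hk, hpair]; ring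
    · simp [ha, ← hk] at hzero
  · obtain ⟨hx1, hx2⟩ := hsplit k hkN hk
    by_cases ha1 : a = pathArc l1 k
    · subst ha1; simp [hk, hx1]
    by_cases ha2 : a = pathArc l2 k
    · subst ha2; simp [Ne.symm hk, hx2]
    · simp [ha1, ha2] at hzero

lemma segment_chi_pathOf_eq (h1 : IsLinOrd l1) (h2 : IsLinOrd l2) (hne : l1 ≠ l2)
    (hc : CoincideOnOneSide l1 l2) :
    segment ℝ (chi (pathOf l1)) (chi (pathOf l2)) =
      {y ∈ flowPolytope (mcArcs α) ∅ Finset.univ |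
        ∀ a, chi (pathOf l1) a = 0 ∧ chi (pathOf l2) a = 0 → y a = 0} := by
  obtain ⟨k₀, hk₀N, -⟩ := exists_pathArc_ne h1 h2 hne
  have hα : 0 < Fintype.card α := by omega
  refine subset_antisymm (fun y hy => ⟨?_, ?_⟩) fun y ⟨hy, hsupp⟩ =>
    mem_segment_of_support h1 h2 hne hc hy hsupp
  · exact (convex_flowPolytope _ _ _).segment_subset (chi_pathOf_mem_flowPolytope h1 hα)
      (chi_pathOf_mem_flowPolytope h2 hα) hy
  · obtain ⟨s, t, -, -, -, rfl⟩ := hy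
    intro a ⟨ha1, ha2⟩
    simp [ha1, ha2]

lemma adjacentVerts_of_coincideOnOneSide (h1 : IsLinOrd l1) (h2 : IsLinOrd l2) (hne : l1 ≠ l2)
    (hc : CoincideOnOneSide l1 l2) :
    AdjacentVerts (flowPolytope (mcArcs α) ∅ Finset.univ) (chi (pathOf l1)) (chi (pathOf l2)) :=
  ⟨fun h => hne (chi_pathOf_injective h1 h2 h), segment_chi_pathOf_eq h1 h2 hne hc ▸
    isExposed_setOf_forall_eq_zero (fun _ hy => hy.2.1) _⟩

lemma IsLinOrd.take_append_drop (h1 : IsLinOrd l1) (h2 : IsLinOrd l2)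
    (hT : (l1.take k).toFinset = (l2.take k).toFinset) : IsLinOrd (l1.take k ++ l2.drop k) := by
  have hT' := h2.toFinset_take_eq_compl k ▸ hT
  refine ⟨List.nodup_append.2 ⟨h1.1.sublist (List.take_sublist _ _),
    h2.1.sublist (List.drop_sublist _ _), fun a ha b hb hab => ?_⟩, fun a => ?_⟩
  · have : a ∈ (l2.drop k).toFinsetᶜ := hT' ▸ List.mem_toFinset.2 ha
    exact Finset.mem_compl.1 this (List.mem_toFinset.2 (hab ▸ hb))
  · by_cases ha : a ∈ l2.drop k
    · exact List.mem_append_right _ ha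
    · have : a ∈ (l1.take k).toFinset := hT' ▸ Finset.mem_compl.2 (mt List.mem_toFinset.1 ha)
      exact List.mem_append_left _ (List.mem_toFinset.1 this)

lemma chi_pathOf_take_append_drop_add (h1 : IsLinOrd l1) (h2 : IsLinOrd l2)
    (hk : k ≤ Fintype.card α) (hT : (l1.take k).toFinset = (l2.take k).toFinset) :
    chi (pathOf (l1.take k ++ l2.drop k)) + chi (pathOf (l2.take k ++ l1.drop k)) =
      chi (pathOf l1) + chi (pathOf l2) := by
  have h3 := h1.take_append_drop h2 hT
  have h4 := h2.take_append_drop h1 hT.symm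
  have hlow : ∀ {l l' : List α}, IsLinOrd l → IsLinOrd l' → ∀ j, j + 1 ≤ k →
      pathArc (l.take k ++ l'.drop k) j = pathArc l j := fun hl _ j hj =>
    pathArc_eq_of_take_eq (List.take_left' (by simp [hl.length_eq, hk])) hj
  have hhigh : ∀ {l l' : List α}, IsLinOrd l → IsLinOrd l' → IsLinOrd (l.take k ++ l'.drop k) →
      ∀ j, k ≤ j → pathArc (l.take k ++ l'.drop k) j = pathArc l' j := fun hl hl' hll' j hj =>
    pathArc_eq_of_drop_eq hll' hl' (List.drop_left' (by simp [hl.length_eq, hk])) hj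
  funext a
  simp only [Pi.add_apply, chi_pathOf_apply h1.1, chi_pathOf_apply h2.1, chi_pathOf_apply h3.1,
    chi_pathOf_apply h4.1, h1.length_eq, h2.length_eq, h3.length_eq, h4.length_eq]
  by_cases hj : a.1.card + 1 ≤ k
  · rw [hlow h1 h2 _ hj, hlow h2 h1 _ hj]
  · rw [hhigh h1 h2 h3 _ (by omega), hhigh h2 h1 h4 _ (by omega), add_comm]

lemma not_adjacentVerts_of_not_coincideOnOneSide (h1 : IsLinOrd l1) (h2 : IsLinOrd l2)
    (hnc : ¬ CoincideOnOneSide l1 l2) :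
    ¬ AdjacentVerts (flowPolytope (mcArcs α) ∅ Finset.univ) (chi (pathOf l1))
      (chi (pathOf l2)) := by
  simp only [CoincideOnOneSide, not_forall, not_or] at hnc
  obtain ⟨k, hk0, hkN, hT, htake, hdrop⟩ := hnc
  rintro ⟨hne, hexp⟩
  have h3 := h1.take_append_drop h2 hT
  have h4 := h2.take_append_drop h1 hT.symm
  have hlen : (l1.take k).length = k := by simp [h1.length_eq, hkN.le]
  have hmem := hexp.mem_of_add_eq (left_mem_segment ℝ _ _) (right_mem_segment ℝ _ _)
    (chi_pathOf_mem_flowPolytope h3 (by omega)) (chi_pathOf_mem_flowPolytope h4 (by omega))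
    (chi_pathOf_take_append_drop_add h1 h2 hkN.le hT)
  rcases eq_or_eq_of_mem_segment_of_zero_one (chi_eq_zero_or_one _) (chi_eq_zero_or_one _)
    (chi_eq_zero_or_one _) hne hmem with h | h
  · apply hdrop
    rw [← chi_pathOf_injective h3 h1 h, List.drop_left' hlen]
  · apply htake
    rw [← chi_pathOf_injective h3 h2 h, List.take_left' hlen]

end Adjacency

section BeginningSets

variable {α : Type*} [DecidableEq α] {l : List α} {S : Finset α} {k : ℕ}

lemma eq_toFinset_take_card (h : l.Nodup) (hS : S = (l.take k).toFinset) :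
    S = (l.take S.card).toFinset := by
  rw [hS, card_toFinset_take h]
  rcases le_total k l.length with hk | hk
  · rw [min_eq_left hk]
  · rw [min_eq_right hk, List.take_of_length_le hk, List.take_length]

lemma filter_mem_eq_take (h : l.Nodup) (hS : S = (l.take k).toFinset) :
    l.filter (fun a => a ∈ S) = l.take k := by
  have hnd : (l.take k ++ l.drop k).Nodup := (List.take_append_drop k l).symm ▸ h
  conv_lhs => rw [← List.take_append_drop k l]
  rw [List.filter_append, List.filter_eq_self.2, List.filter_eq_nil_iff.2, List.append_nil]
  · exact fun a ha haS =>
      List.disjoint_of_nodup_append hnd (List.mem_toFinset.1 (hS ▸ by simpa using haS)) ha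
  · exact fun a ha => by simpa [hS] using ha

lemma filter_notMem_eq_drop (h : l.Nodup) (hS : S = (l.take k).toFinset) :
    l.filter (fun a => a ∉ S) = l.drop k := by
  have hnd : (l.take k ++ l.drop k).Nodup := (List.take_append_drop k l).symm ▸ h
  conv_lhs => rw [← List.take_append_drop k l]
  rw [List.filter_append, List.filter_eq_nil_iff.2, List.filter_eq_self.2, List.nil_append]
  · exact fun a ha => by
      simpa [hS] using fun hat => List.disjoint_of_nodup_append hnd hat ha
  · exact fun a ha => by simpa [hS] using ha

end BeginningSets

lemma coincideOnOneSide_iff {α : Type*} [Fintype α] [DecidableEq α] {l1 l2 : List α}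
    (h1 : IsLinOrd l1) (h2 : IsLinOrd l2) :
    CoincideOnOneSide l1 l2 ↔
      ∀ S : Finset α, S ≠ ∅ → S ≠ Finset.univ →
        (∃ k, S = (l1.take k).toFinset) → (∃ k, S = (l2.take k).toFinset) →
        (l1.filter (fun a => a ∈ S) = l2.filter (fun a => a ∈ S) ∨
          l1.filter (fun a => a ∉ S) = l2.filter (fun a => a ∉ S)) := by
  constructor
  · rintro hc S hS₀ hSu ⟨k₁, hk₁⟩ ⟨k₂, hk₂⟩
    have hS1 := eq_toFinset_take_card h1.1 hk₁
    have hS2 := eq_toFinset_take_card h2.1 hk₂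
    rw [filter_mem_eq_take h1.1 hS1, filter_mem_eq_take h2.1 hS2,
      filter_notMem_eq_drop h1.1 hS1, filter_notMem_eq_drop h2.1 hS2]
    exact hc _ (Finset.card_pos.2 (Finset.nonempty_iff_ne_empty.2 hS₀))
      ((Finset.card_lt_iff_ne_univ S).2 hSu) (hS1.symm.trans hS2)
  · intro h k hk₀ hkN hB
    have hcard : (l1.take k).toFinset.card = k := by
      rw [card_toFinset_take h1.1, h1.length_eq]; omega
    have := h _ (fun h => by simp [h] at hcard; omega)
      (fun h => by rw [h, Finset.card_univ] at hcard; omega) ⟨k, rfl⟩ ⟨k, hB⟩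
    rwa [filter_mem_eq_take h1.1 rfl, filter_mem_eq_take h2.1 hB,
      filter_notMem_eq_drop h1.1 rfl, filter_notMem_eq_drop h2.1 hB] at this

theorem stmt16_general {α : Type*} [Fintype α] [DecidableEq α]
    (l1 l2 : List α) (h1 : IsLinOrd l1) (h2 : IsLinOrd l2) (hne : l1 ≠ l2) :
    AdjacentVerts (flowPolytope (mcArcs α) ∅ Finset.univ)
        (chi (pathOf l1)) (chi (pathOf l2)) ↔
      ∀ S : Finset α, S ≠ ∅ → S ≠ Finset.univ →
        (∃ k, S = (l1.take k).toFinset) → (∃ k, S = (l2.take k).toFinset) →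
        (l1.filter (fun a => a ∈ S) = l2.filter (fun a => a ∈ S) ∨
          l1.filter (fun a => a ∉ S) = l2.filter (fun a => a ∉ S)) := by
  rw [← coincideOnOneSide_iff h1 h2]
  exact ⟨fun hadj => of_not_not fun hc => not_adjacentVerts_of_not_coincideOnOneSide h1 h2 hc hadj,
    adjacentVerts_of_coincideOnOneSide h1 h2 hne⟩

/-- The vertices of the multiple choice polytope corresponding to two distinct linear
orderings `L₁`, `L₂` are adjacent iff whenever a nonempty proper subset `S` is a
beginning set of both, the orderings coincide on `S` or on `C \ S`. -/
theorem stmt16 {α : Type*} [Fintype α] [DecidableEq α] (hcard : 2 ≤ Fintype.card α)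
    (l1 l2 : List α) (h1 : IsLinOrd l1) (h2 : IsLinOrd l2) (hne : l1 ≠ l2) :
    AdjacentVerts (flowPolytope (mcArcs α) ∅ Finset.univ)
        (chi (pathOf l1)) (chi (pathOf l2)) ↔
      ∀ S : Finset α, S ≠ ∅ → S ≠ Finset.univ →
        (∃ k, S = (l1.take k).toFinset) → (∃ k, S = (l2.take k).toFinset) →
        (l1.filter (fun a => a ∈ S) = l2.filter (fun a => a ∈ S) ∨
          l1.filter (fun a => a ∉ S) = l2.filter (fun a => a ∉ S)) :=
  stmt16_general l1 l2 h1 h2 hne
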